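/- arXiv:1406.3879 — 4 statements merged into one kernel-verified Lean document; each statement's English description precedes it below -/
import Mathlib

section
/- For every monic irreducible polynomial $\pi \in A$ and every integer $n \geq 1$, the polynomial $\rho_{\pi^{n-1}}(X)$ divides $\rho_{\pi^{n}}(X)$ in $A[X]$, and the quotient $\rho_{\pi^{n}}(X)/\rho_{\pi^{n-1}}(X)$ is a monic Eisenstein polynomial at the prime ideal $(\pi)$: all of its non-leading coefficients are divisible by $\pi$, and its constant term is not divisible by $\pi^2$. -/
/-!
Write `ρ_a = ∑ cᵢ X^{qⁱ}`: only `q`-power exponents occur, and `c₀ = a`. Comparing the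
coefficients of `X^{q^{i+1}}` in `ρ_a ∘ ρ_T = ρ_T ∘ ρ_a` gives
`c_{i+1} (T^{q^{i+1}} - T) = cᵢ^q - cᵢ`. For `a = π` irreducible of degree `d`, `π` does not
divide `T^{qⁱ} - T` when `0 < i < d`, so `π ∣ cᵢ` for all `i < d` by induction: `ρ_π ≡ X^{q^d}`
mod `π`. Writing `ρ_π = X g`, the quotient is `Q = g ∘ ρ_{π^{n-1}}`. It is monic, congruent to
`X^{deg Q}` mod `π`, and its constant term is `g(0) = c₀ = π`.
-/

open Polynomial

namespace Polynomial

theorem coeff_comp_C_mul_X {R : Type*} [CommSemiring R] (p : R[X]) (r : R) (n : ℕ) :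
    (p.comp (C r * X)).coeff n = r ^ n * p.coeff n := by
  induction p using Polynomial.induction_on' with
  | add p q hp hq => simp [add_comp, hp, hq, mul_add]
  | monomial k a =>
    rw [← C_mul_X_pow_eq_monomial, mul_comp, C_comp, X_pow_comp, mul_pow, ← C_pow,
      ← mul_assoc, ← C_mul, coeff_C_mul_X_pow, coeff_C_mul_X_pow]
    split_ifs with h
    · rw [h, mul_comm]
    · rw [mul_zero]

theorem coeff_pow_card_mul {K R : Type*} [Field K] [Fintype K] [CommRing R] [Algebra K R]
    (f : R[X]) (n : ℕ) :
    (f ^ Fintype.card K).coeff (n * Fintype.card K) = f.coeff n ^ Fintype.card K := by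
  have h_frobenius : (FiniteField.frobeniusAlgHom K R[X]).toRingHom =
      (expand R (Fintype.card K)).toRingHom.comp
        (mapRingHom (FiniteField.frobeniusAlgHom K R)) := by
    refine ringHom_ext (fun a => ?_) ?_ <;> simp [C_pow]
  have := congrArg (fun φ : R[X] →+* R[X] => (φ f).coeff (n * Fintype.card K)) h_frobenius
  simpa [coeff_expand_mul Fintype.card_pos] using this

theorem dvd_coeff_of_map_mk_eq_X_pow {R : Type*} [CommRing R] {π : R[X]} {f : R[X][X]}
    {k i : ℕ} (h : f.map (AdjoinRoot.mk π) = X ^ k) (hi : i ≠ k) : π ∣ f.coeff i :=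
  AdjoinRoot.mk_eq_zero.mp (by simpa [hi] using congrArg (coeff · i) h)

end Polynomial

section CarlitzModule

variable {Fq : Type*} [Field Fq] [Fintype Fq]

local notation "q" => Fintype.card Fq

structure IsCarlitzModule (ρ : Fq[X] → Fq[X][X]) : Prop where
  map_C (c : Fq) : ρ (C c) = C (C c) * X
  map_X : ρ X = C X * X + X ^ q
  map_add (a b : Fq[X]) : ρ (a + b) = ρ a + ρ b
  map_mul (a b : Fq[X]) : ρ (a * b) = (ρ a).comp (ρ b)

namespace IsCarlitzModule

variable {ρ : Fq[X] → Fq[X][X]} (hρ : IsCarlitzModule ρ)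
include hρ

theorem map_zero : ρ 0 = 0 := by simpa using hρ.map_C 0

theorem map_one : ρ 1 = X := by simpa using hρ.map_C 1

theorem map_C_mul (c : Fq) (a : Fq[X]) : ρ (C c * a) = C (C c) * ρ a := by
  rw [hρ.map_mul, hρ.map_C, mul_comp, C_comp, X_comp]

theorem comp_add (a : Fq[X]) (f g : Fq[X][X]) :
    (ρ a).comp (f + g) = (ρ a).comp f + (ρ a).comp g := by
  induction a using Polynomial.recOnHorner generalizing f g with
  | M0 => simp [hρ.map_zero]
  | MC p c _ _ ih =>
    simp only [hρ.map_add, hρ.map_C, add_comp, ih, mul_comp, C_comp, X_comp]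
    ring
  | MX p _ ih =>
    have h_frobenius : (f + g) ^ q = f ^ q + g ^ q := by
      simpa using _root_.map_add (FiniteField.frobeniusAlgHom Fq Fq[X][X]) f g
    have hX : (ρ X).comp (f + g) = (ρ X).comp f + (ρ X).comp g := by
      simp only [hρ.map_X, add_comp, mul_comp, C_comp, X_comp, X_pow_comp, h_frobenius]
      ring
    rw [hρ.map_mul, comp_assoc, hX, ih, comp_assoc, comp_assoc]

theorem map_mul_X (a : Fq[X]) : ρ (a * X) = (ρ a).comp (C X * X) + expand _ q (ρ a) := by
  rw [hρ.map_mul, hρ.map_X, hρ.comp_add, expand_eq_comp_X_pow]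

theorem coeff_map_mul_X (a : Fq[X]) (j : ℕ) :
    (ρ (a * X)).coeff j =
      X ^ j * (ρ a).coeff j + if q ∣ j then (ρ a).coeff (j / q) else 0 := by
  rw [hρ.map_mul_X, coeff_add, coeff_comp_C_mul_X, coeff_expand Fintype.card_pos]

theorem coeff_zero_eq_zero (a : Fq[X]) : (ρ a).coeff 0 = 0 := by
  induction a using Polynomial.recOnHorner with
  | M0 => simp [hρ.map_zero]
  | MC p c _ _ ih => simp [hρ.map_add, hρ.map_C, ih]
  | MX p _ ih => simp [hρ.coeff_map_mul_X, ih]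

theorem coeff_one (a : Fq[X]) : (ρ a).coeff 1 = a := by
  induction a using Polynomial.recOnHorner with
  | M0 => simp [hρ.map_zero]
  | MC p c _ _ ih => simp [hρ.map_add, hρ.map_C, ih]
  | MX p _ ih =>
    rw [hρ.coeff_map_mul_X, ih, if_neg (Nat.not_dvd_of_pos_of_lt one_pos Fintype.one_lt_card),
      add_zero, pow_one, mul_comm]

theorem coeff_eq_zero_of_ne_pow {j : ℕ} (hj : ∀ i, j ≠ q ^ i) (a : Fq[X]) :
    (ρ a).coeff j = 0 := by
  induction a using Polynomial.recOnHorner generalizing j with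
  | M0 => simp [hρ.map_zero]
  | MC p c _ _ ih =>
    have hj1 : 1 ≠ j := by simpa [eq_comm] using hj 0
    simp [hρ.map_add, hρ.map_C, ih hj, coeff_X, hj1]
  | MX p _ ih =>
    rw [hρ.coeff_map_mul_X, ih hj, mul_zero, zero_add]
    split_ifs with hq
    · refine ih fun i hi => hj (i + 1) ?_
      rw [pow_succ, ← hi, Nat.div_mul_cancel hq]
    · rfl

theorem natDegree_map_X : (ρ X).natDegree = q := by
  have := Fintype.one_lt_card (α := Fq)
  rw [hρ.map_X]
  compute_degree! <;> simp [this.ne', this.le]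

theorem monic_map_X : (ρ X).Monic := by
  have := Fintype.one_lt_card (α := Fq)
  rw [hρ.map_X]
  monicity!
  simp [this.le, not_le.mpr this]

theorem monic_map_X_pow (n : ℕ) : (ρ (X ^ n)).Monic := by
  induction n with
  | zero => rw [pow_zero, hρ.map_one]; exact monic_X
  | succ n ih =>
    rw [pow_succ, hρ.map_mul]
    exact ih.comp hρ.monic_map_X (by rw [hρ.natDegree_map_X]; exact Fintype.card_ne_zero)

theorem natDegree_map_X_pow (n : ℕ) : (ρ (X ^ n)).natDegree = q ^ n := by
  induction n with
  | zero => simp [hρ.map_one]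
  | succ n ih => rw [pow_succ, hρ.map_mul, natDegree_comp, ih, hρ.natDegree_map_X, pow_succ]

theorem natDegree_le_and_coeff_card_pow {a : Fq[X]} {N : ℕ} (ha : a.natDegree ≤ N) :
    (ρ a).natDegree ≤ q ^ N ∧ (ρ a).coeff (q ^ N) = C (a.coeff N) := by
  refine induction_with_natDegree_le
    (fun a => (ρ a).natDegree ≤ q ^ N ∧ (ρ a).coeff (q ^ N) = C (a.coeff N)) N ?_ ?_ ?_ a ha
  · simp [hρ.map_zero]
  · intro n r _ hn
    have hdeg := hρ.natDegree_map_X_pow n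
    rw [hρ.map_C_mul, coeff_C_mul_X_pow, coeff_C_mul]
    refine ⟨(natDegree_C_mul_le _ _).trans (hdeg ▸ Nat.pow_le_pow_right Fintype.card_pos hn), ?_⟩
    rcases hn.eq_or_lt with rfl | hlt
    · rw [← hdeg, (hρ.monic_map_X_pow _).coeff_natDegree, if_pos rfl, mul_one]
    · rw [coeff_eq_zero_of_natDegree_lt (hdeg ▸ Nat.pow_lt_pow_right Fintype.one_lt_card hlt),
        if_neg hlt.ne', mul_zero, C_0]
  · intro f g _ _ hf hg
    rw [hρ.map_add, coeff_add, coeff_add, hf.2, hg.2, C_add]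
    exact ⟨(natDegree_add_le _ _).trans (max_le hf.1 hg.1), rfl⟩

theorem monic {a : Fq[X]} (ha : a.Monic) : (ρ a).Monic := by
  obtain ⟨hle, hcoeff⟩ := hρ.natDegree_le_and_coeff_card_pow le_rfl (a := a)
  refine monic_of_natDegree_le_of_coeff_eq_one _ hle ?_
  rw [hcoeff, ← leadingCoeff, ha.leadingCoeff, C_1]

theorem natDegree_eq {a : Fq[X]} (ha : a ≠ 0) : (ρ a).natDegree = q ^ a.natDegree := by
  obtain ⟨hle, hcoeff⟩ := hρ.natDegree_le_and_coeff_card_pow le_rfl (a := a)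
  exact natDegree_eq_of_le_of_coeff_ne_zero hle (by simp [hcoeff, ha])

theorem coeff_card_pow_succ_mul (a : Fq[X]) (i : ℕ) :
    (ρ a).coeff (q ^ (i + 1)) * (X ^ q ^ (i + 1) - X) =
      (ρ a).coeff (q ^ i) ^ q - (ρ a).coeff (q ^ i) := by
  have h_comm := hρ.coeff_map_mul_X a (q ^ (i + 1))
  rw [if_pos (dvd_pow_self _ i.succ_ne_zero), pow_succ, Nat.mul_div_cancel _ Fintype.card_pos,
    mul_comm a, hρ.map_mul, hρ.map_X, add_comp, mul_comp, C_comp, X_comp, X_pow_comp,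
    coeff_add, coeff_C_mul, coeff_pow_card_mul] at h_comm
  rw [pow_succ]
  linear_combination -h_comm

theorem dvd_coeff_card_pow {π : Fq[X]} (hπ : Irreducible π) {i : ℕ} (hi : i < π.natDegree) :
    π ∣ (ρ π).coeff (q ^ i) := by
  induction i with
  | zero => rw [pow_zero, hρ.coeff_one]
  | succ i ih =>
    have h_not_dvd : ¬ π ∣ X ^ q ^ (i + 1) - X := fun h => by
      have := hπ.natDegree_dvd_of_dvd_X_pow_card_pow_sub_X (by rwa [Nat.card_eq_fintype_card])
      exact absurd (Nat.le_of_dvd i.succ_pos this) (not_le.mpr hi)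
    have h_dvd : π ∣ (ρ π).coeff (q ^ (i + 1)) * (X ^ q ^ (i + 1) - X) := by
      have hπ_dvd := ih (by omega)
      rw [hρ.coeff_card_pow_succ_mul]
      exact dvd_sub (dvd_pow hπ_dvd Fintype.card_ne_zero) hπ_dvd
    exact (hπ.prime.dvd_or_dvd h_dvd).resolve_right h_not_dvd

theorem map_mk_eq_X_pow {π : Fq[X]} (hmonic : π.Monic) (hπ : Irreducible π) :
    (ρ π).map (AdjoinRoot.mk π) = X ^ q ^ π.natDegree := by
  obtain ⟨hle, htop⟩ := hρ.natDegree_le_and_coeff_card_pow le_rfl (a := π)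
  ext j
  rw [coeff_map, coeff_X_pow]
  split_ifs with hj
  · rw [hj, htop, ← leadingCoeff, hmonic.leadingCoeff, C_1, _root_.map_one]
  refine AdjoinRoot.mk_eq_zero.mpr ?_
  by_cases hpow : ∃ i, j = q ^ i
  · obtain ⟨i, rfl⟩ := hpow
    rcases lt_or_gt_of_ne (fun h : i = π.natDegree => hj (h ▸ rfl)) with hi | hi
    · exact hρ.dvd_coeff_card_pow hπ hi
    · rw [coeff_eq_zero_of_natDegree_lt
        (hle.trans_lt (Nat.pow_lt_pow_right Fintype.one_lt_card hi))]
      exact dvd_zero _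
  · rw [hρ.coeff_eq_zero_of_ne_pow (not_exists.mp hpow)]
    exact dvd_zero _

theorem map_mk_pow_eq_X_pow {π : Fq[X]} (hmonic : π.Monic) (hπ : Irreducible π) (m : ℕ) :
    (ρ (π ^ m)).map (AdjoinRoot.mk π) = X ^ q ^ (π.natDegree * m) := by
  induction m with
  | zero => simp [hρ.map_one]
  | succ m ih =>
    rw [pow_succ', hρ.map_mul, map_comp, hρ.map_mk_eq_X_pow hmonic hπ, ih, X_pow_comp,
      ← pow_mul, ← pow_add, mul_add_one, add_comm]

theorem exists_eq_X_mul_of_irreducible {π : Fq[X]} (hmonic : π.Monic) (hπ : Irreducible π) :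
    ∃ g : Fq[X][X], ρ π = X * g ∧ g.Monic ∧ g.coeff 0 = π ∧
      g.map (AdjoinRoot.mk π) = X ^ (q ^ π.natDegree - 1) := by
  obtain ⟨g, hg⟩ : X ∣ ρ π := X_dvd_iff.mpr (hρ.coeff_zero_eq_zero π)
  refine ⟨g, hg, monic_X.of_mul_monic_left (hg ▸ hρ.monic hmonic), ?_, ?_⟩
  · rw [← coeff_X_mul, ← hg, hρ.coeff_one]
  · have : Fact (Irreducible π) := ⟨hπ⟩
    have h := hρ.map_mk_eq_X_pow hmonic hπ
    rw [hg, Polynomial.map_mul, Polynomial.map_X,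
      ← Nat.sub_add_cancel (Nat.one_le_pow _ _ Fintype.card_pos), pow_succ'] at h
    exact mul_left_cancel₀ X_ne_zero h

end IsCarlitzModule

end CarlitzModule

/-- **Hayes' Lemma.** Let `A = 𝔽_q[T]` and let `ρ : A → A[X]` be the Carlitz module,
determined by `ρ_c(X) = cX` for constants `c`, `ρ_T(X) = TX + X^q`, additivity, and
`ρ_{ab} = ρ_a ∘ ρ_b`.  For every monic irreducible `π` and every `n ≥ 1`, the polynomial
`ρ_{π^{n-1}}` divides `ρ_{π^n}` in `A[X]` and the quotient is a monic Eisenstein polynomial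
at the prime `(π)`: all non-leading coefficients are divisible by `π` and the constant
term is not divisible by `π^2`. -/
theorem carlitz_quotient_eisenstein
    (Fq : Type) [Field Fq] [Fintype Fq]
    (ρ : Polynomial Fq → Polynomial (Polynomial Fq))
    (hρC : ∀ c : Fq, ρ (Polynomial.C c) = Polynomial.C (Polynomial.C c) * Polynomial.X)
    (hρT : ρ Polynomial.X =
      Polynomial.C Polynomial.X * Polynomial.X + Polynomial.X ^ Fintype.card Fq)
    (hρadd : ∀ a b : Polynomial Fq, ρ (a + b) = ρ a + ρ b)
    (hρmul : ∀ a b : Polynomial Fq, ρ (a * b) = (ρ a).comp (ρ b))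
    (π : Polynomial Fq) (hπmonic : π.Monic) (hπirr : Irreducible π)
    (n : ℕ) (hn : 1 ≤ n) :
    ∃ Q : Polynomial (Polynomial Fq),
      ρ (π ^ n) = ρ (π ^ (n - 1)) * Q ∧
      Q.Monic ∧
      (∀ i < Q.natDegree, π ∣ Q.coeff i) ∧
      ¬ (π ^ 2 ∣ Q.coeff 0) := by
  have hρ : IsCarlitzModule ρ := ⟨hρC, hρT, hρadd, hρmul⟩
  have : Fact (Irreducible π) := ⟨hπirr⟩
  obtain ⟨m, rfl⟩ : ∃ m, n = m + 1 := ⟨n - 1, by omega⟩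
  rw [Nat.add_sub_cancel]
  obtain ⟨g, hg, hg_monic, hg_coeff_zero, hg_map⟩ := hρ.exists_eq_X_mul_of_irreducible hπmonic hπirr
  set Y := ρ (π ^ m)
  have hY_deg : Y.natDegree ≠ 0 := by
    rw [hρ.natDegree_eq (pow_ne_zero _ hπmonic.ne_zero)]
    positivity
  have hQ_monic : (g.comp Y).Monic := hg_monic.comp (hρ.monic (hπmonic.pow _)) hY_deg
  have hQ_map : (g.comp Y).map (AdjoinRoot.mk π) = X ^ (g.comp Y).natDegree := by
    rw [← hQ_monic.natDegree_map (AdjoinRoot.mk π), map_comp, hg_map,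
      hρ.map_mk_pow_eq_X_pow hπmonic hπirr, X_pow_comp, natDegree_pow, natDegree_X_pow,
      ← pow_mul, mul_comm]
  have hQ_coeff_zero : (g.comp Y).coeff 0 = π := by
    rw [coeff_zero_eq_eval_zero, eval_comp, ← coeff_zero_eq_eval_zero, hρ.coeff_zero_eq_zero,
      ← coeff_zero_eq_eval_zero, hg_coeff_zero]
  have h_sq : ¬ π ^ 2 ∣ π := by
    simpa using (pow_dvd_pow_iff (n := 2) (m := 1) hπmonic.ne_zero hπirr.not_isUnit).not.mpr
  refine ⟨g.comp Y, ?_, hQ_monic, fun i hi => dvd_coeff_of_map_mk_eq_X_pow hQ_map hi.ne, ?_⟩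
  · rw [pow_succ', hρ.map_mul, hg, mul_comp, X_comp]
  · rwa [hQ_coeff_zero]
end

section
/- Let $p$ be a prime, let $m, r$ be positive integers, and set $n = m p^r$. Work in the polynomial ring $\mathbb{Z}[x_1, \dots, x_N]$ with $N \geq n$ variables. Let $\mu$ be a partition of $n$ that is not the partition consisting of $p^r$ parts all equal to $m$, and let $\xi$ be the partition of $n$ consisting of $m$ parts all equal to $p^r$. Then for any family of integers $(a_{\nu})$, indexed by the partitions $\nu$ of $n$, satisfying $m_{\mu} = \sum_{\nu \vdash n} a_{\nu} e_{\nu}$, the coefficient $a_{\xi}$ is divisible by $p$. -/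
open MvPolynomial

section Rot

variable {K N : ℕ} [NeZero K]

/-- Rotation of the first `K` coordinates of `Fin N` by `g : ZMod K`. -/
def rotFun (hKN : K ≤ N) (g : ZMod K) (i : Fin N) : Fin N :=
  if (i : ℕ) < K then ⟨(g + ((i : ℕ) : ZMod K)).val, (ZMod.val_lt _).trans_le hKN⟩ else i

lemma rotFun_val_of_lt (hKN : K ≤ N) (g : ZMod K) {i : Fin N} (hi : (i : ℕ) < K) :
    ((rotFun hKN g i : Fin N) : ℕ) = (g + ((i : ℕ) : ZMod K)).val := by
  simp [rotFun, hi]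

lemma rotFun_of_not_lt (hKN : K ≤ N) (g : ZMod K) {i : Fin N} (hi : ¬ (i : ℕ) < K) :
    rotFun hKN g i = i := by
  simp [rotFun, hi]

lemma rotFun_lt (hKN : K ≤ N) (g : ZMod K) {i : Fin N} (hi : (i : ℕ) < K) :
    ((rotFun hKN g i : Fin N) : ℕ) < K := by
  rw [rotFun_val_of_lt hKN g hi]; exact ZMod.val_lt _

lemma rotFun_comp (hKN : K ≤ N) (g g' : ZMod K) (i : Fin N) :
    rotFun hKN g (rotFun hKN g' i) = rotFun hKN (g + g') i := by
  by_cases hi : (i : ℕ) < K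
  · apply Fin.ext
    rw [rotFun_val_of_lt hKN g (rotFun_lt hKN g' hi), rotFun_val_of_lt hKN g' hi,
      rotFun_val_of_lt hKN _ hi]
    congr 1
    rw [ZMod.natCast_val, ZMod.cast_id]
    ring
  · rw [rotFun_of_not_lt hKN g' hi, rotFun_of_not_lt hKN g hi, rotFun_of_not_lt hKN _ hi]

lemma rotFun_zero (hKN : K ≤ N) (i : Fin N) : rotFun hKN (0 : ZMod K) i = i := by
  by_cases hi : (i : ℕ) < K
  · apply Fin.ext
    rw [rotFun_val_of_lt hKN _ hi, zero_add, ZMod.val_natCast_of_lt hi]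
  · exact rotFun_of_not_lt hKN _ hi

/-- Rotation as a permutation. -/
def rotPerm (hKN : K ≤ N) (g : ZMod K) : Equiv.Perm (Fin N) :=
  ⟨rotFun hKN g, rotFun hKN (-g),
   fun i => by rw [rotFun_comp, neg_add_cancel, rotFun_zero],
   fun i => by rw [rotFun_comp, add_neg_cancel, rotFun_zero]⟩

lemma rotPerm_apply (hKN : K ≤ N) (g : ZMod K) (i : Fin N) :
    rotPerm hKN g i = rotFun hKN g i := rfl

variable (K N)

/-- The set of monomials of shape `μ` supported on the first `K` variables. -/
def RotSet (n : ℕ) (μ : Nat.Partition n) : Type :=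
  {s : Sym (Fin N) n // Nat.Partition.ofSym s = μ ∧ ∀ i ∈ s, (i : ℕ) < K}

instance (n : ℕ) (μ : Nat.Partition n) : Finite (RotSet K N n μ) := by
  unfold RotSet; infer_instance

/-- The cyclic group `ZMod K` acts on `RotSet` by rotating the variables. -/
def rotAction (n : ℕ) (μ : Nat.Partition n) [Fact (K ≤ N)] :
    MulAction (Multiplicative (ZMod K)) (RotSet K N n μ) where
  smul g s := ⟨s.1.map (rotPerm Fact.out g.toAdd),
    by rw [Nat.Partition.ofSym_map]; exact s.2.1,
    by
      intro i hi
      rw [Sym.mem_map] at hi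
      obtain ⟨j, hj, rfl⟩ := hi
      exact rotFun_lt Fact.out _ (s.2.2 j hj)⟩
  one_smul s := by
    apply Subtype.ext
    show Sym.map _ s.1 = s.1
    have h : ⇑(rotPerm (Fact.out : K ≤ N) (Multiplicative.toAdd 1)) = id :=
      funext fun i => rotFun_zero Fact.out i
    rw [h, Sym.map_id]
  mul_smul g g' s := by
    apply Subtype.ext
    show Sym.map _ s.1 = Sym.map _ (Sym.map _ s.1)
    rw [Sym.map_map]
    congr 1
    funext i
    simp only [Function.comp_apply, rotPerm_apply, rotFun_comp, toAdd_mul]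

end Rot

lemma card_filter_lt_eq {K N : ℕ} (hKN : K ≤ N) :
    (Finset.univ.filter fun j : Fin N => (j : ℕ) < K).card = K := by
  rw [← Fintype.card_subtype]
  have e : {j : Fin N // (j : ℕ) < K} ≃ Fin K :=
    { toFun := fun j => ⟨j.1, j.2⟩
      invFun := fun i => ⟨⟨i.1, i.2.trans_le hKN⟩, i.2⟩
      left_inv := fun j => rfl
      right_inv := fun i => rfl }
  rw [Fintype.card_congr e, Fintype.card_fin]

/-- Key combinatorial lemma via the orbit-counting theorem for `p`-groups. -/
lemma key_card_dvd (p m r N : ℕ) (hp : p.Prime) (hm : 0 < m)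
    (hN : m * p ^ r ≤ N)
    (μ : Nat.Partition (m * p ^ r))
    (hμ : μ.parts ≠ Multiset.replicate (p ^ r) m) :
    p ∣ Nat.card (RotSet (p ^ r) N (m * p ^ r) μ) := by
  haveI : NeZero (p ^ r) := ⟨(pow_pos hp.pos r).ne'⟩
  haveI : Fact p.Prime := ⟨hp⟩
  have hKN : p ^ r ≤ N := le_trans (Nat.le_mul_of_pos_left _ hm) hN
  haveI : Fact (p ^ r ≤ N) := ⟨hKN⟩
  letI := rotAction (p ^ r) N (m * p ^ r) μ
  have hG : IsPGroup p (Multiplicative (ZMod (p ^ r))) := by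
    apply IsPGroup.of_card (n := r)
    simp [Nat.card_eq_fintype_card, Fintype.card_multiplicative, ZMod.card]
  haveI : IsEmpty
      (MulAction.fixedPoints (Multiplicative (ZMod (p ^ r))) (RotSet (p ^ r) N (m * p ^ r) μ)) := by
    constructor
    rintro ⟨s, hs⟩
    rw [MulAction.mem_fixedPoints] at hs
    have hK0 : 0 < p ^ r := pow_pos hp.pos r
    set t : Multiset (Fin N) := s.1.1 with ht
    have htcard : Multiset.card t = m * p ^ r := s.1.2
    have hsupp : ∀ i ∈ t, (i : ℕ) < p ^ r := fun i hi => s.2.2 i hi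
    have hmapt : ∀ g : ZMod (p ^ r), t.map (rotPerm hKN g) = t := by
      intro g
      have h4 : (Multiplicative.ofAdd g • s).1.1 = s.1.1 := by
        rw [hs (Multiplicative.ofAdd g)]
      exact h4
    have hcount : ∀ (g : ZMod (p ^ r)) (j : Fin N),
        Multiset.count (rotPerm hKN g j) t = Multiset.count j t := by
      intro g j
      conv_lhs => rw [← hmapt g]
      exact Multiset.count_map_eq_count' _ t (rotPerm hKN g).injective j
    let j0 : Fin N := ⟨0, lt_of_lt_of_le hK0 hKN⟩
    have hcj : ∀ j : Fin N, (j : ℕ) < p ^ r →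
        Multiset.count j t = Multiset.count j0 t := by
      intro j hj
      have h1 : rotPerm hKN ((j : ℕ) : ZMod (p ^ r)) j0 = j := by
        apply Fin.ext
        rw [rotPerm_apply, rotFun_val_of_lt hKN _ (show ((j0 : Fin N) : ℕ) < p ^ r from hK0)]
        show ((((j : ℕ) : ZMod (p ^ r)) + (((0 : ℕ) : ℕ) : ZMod (p ^ r))).val) = (j : ℕ)
        rw [Nat.cast_zero, add_zero, ZMod.val_natCast_of_lt hj]
      rw [← h1, hcount]
    have hc0 : Multiset.count j0 t ≠ 0 := by
      intro h0
      have hempty : ∀ j : Fin N, j ∉ t := by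
        intro j hj
        have h1 := hcj j (hsupp j hj)
        rw [h0] at h1
        exact absurd h1 (Multiset.count_pos.mpr hj).ne'
      have ht0 : t = 0 := Multiset.eq_zero_of_forall_notMem hempty
      rw [ht0] at htcard
      simp only [Multiset.card_zero] at htcard
      have := Nat.mul_pos hm hK0
      omega
    have hparts : μ.parts = t.dedup.map t.count := by
      rw [← s.2.1]
      rfl
    have hdedupmem : ∀ j : Fin N, j ∈ t.dedup ↔ (j : ℕ) < p ^ r := by
      intro j
      rw [Multiset.mem_dedup]
      constructor
      · exact hsupp j
      · intro hj
        rw [← Multiset.count_pos, hcj j hj]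
        exact Nat.pos_of_ne_zero hc0
    have hdedupcard : Multiset.card t.dedup = p ^ r := by
      have hnodup : t.dedup.Nodup := Multiset.nodup_dedup t
      have heq : (⟨t.dedup, hnodup⟩ : Finset (Fin N)) =
          Finset.univ.filter (fun j : Fin N => (j : ℕ) < p ^ r) := by
        apply Finset.ext
        intro j
        simp only [Finset.mem_filter, Finset.mem_univ, true_and]
        exact ⟨fun h => (hdedupmem j).1 h, fun h => (hdedupmem j).2 h⟩
      have hcard := congrArg Finset.card heq
      rw [card_filter_lt_eq hKN] at hcard
      exact hcard
    have hrepl : μ.parts = Multiset.replicate (p ^ r) (Multiset.count j0 t) := by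
      rw [hparts, Multiset.eq_replicate]
      constructor
      · rw [Multiset.card_map, hdedupcard]
      · intro b hb
        rw [Multiset.mem_map] at hb
        obtain ⟨j, hj, rfl⟩ := hb
        exact hcj j ((hdedupmem j).1 hj)
    have hsum := μ.parts_sum
    rw [hrepl, Multiset.sum_replicate, smul_eq_mul] at hsum
    have hcm : Multiset.count j0 t = m := by
      have h2 : p ^ r * Multiset.count j0 t = p ^ r * m := by rw [hsum]; ring
      exact Nat.eq_of_mul_eq_mul_left hK0 h2
    rw [hcm] at hrepl
    exact hμ hrepl
  have hmod := hG.card_modEq_card_fixedPoints (RotSet (p ^ r) N (m * p ^ r) μ)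
  have h0 : Nat.card
      (MulAction.fixedPoints (Multiplicative (ZMod (p ^ r))) (RotSet (p ^ r) N (m * p ^ r) μ)) = 0 :=
    Nat.card_of_isEmpty
  rw [h0] at hmod
  exact (Nat.modEq_zero_iff_dvd).mp hmod

/-- Let `p` be a prime, `m, r ≥ 1`, `n = m·p^r`, and work in `ℤ[x₁,…,x_N]` with `N ≥ n`
variables.  Let `μ` be a partition of `n` that is not the partition with `p^r` parts all
equal to `m`, and let `ξ` be the partition of `n` with `m` parts all equal to `p^r`.  If
integers `(a_ν)`, indexed by the partitions `ν` of `n`, satisfy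
`m_μ = ∑_{ν ⊢ n} a_ν e_ν`, then `p ∣ a_ξ`. -/
theorem coeff_of_exi_in_msymm_divisible
    (p m r N : ℕ) (hp : p.Prime) (hm : 0 < m) (hr : 0 < r)
    (hN : m * p ^ r ≤ N)
    (μ : Nat.Partition (m * p ^ r))
    (hμ : μ.parts ≠ Multiset.replicate (p ^ r) m)
    (a : Nat.Partition (m * p ^ r) → ℤ)
    (ha : MvPolynomial.msymm (Fin N) ℤ μ =
      ∑ ν : Nat.Partition (m * p ^ r), a ν • MvPolynomial.esymmPart (Fin N) ℤ ν) :
    (p : ℤ) ∣ a ⟨Multiset.replicate m (p ^ r),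
      fun hi => by rw [Multiset.eq_of_mem_replicate hi]; exact pow_pos hp.pos r,
      by rw [Multiset.sum_replicate, smul_eq_mul]⟩ := by
  classical
  haveI : NeZero (p ^ r) := ⟨(pow_pos hp.pos r).ne'⟩
  have hKN : p ^ r ≤ N := le_trans (Nat.le_mul_of_pos_left _ hm) hN
  set v : Fin N → Polynomial (ZMod p) :=
    (fun i => if (i : ℕ) < p ^ r then Polynomial.X else 0) with hv
  -- Step 1 : evaluation of esymm
  have hesymm : ∀ k : ℕ, aeval v (esymm (Fin N) ℤ k) =
      ((p ^ r).choose k) • (Polynomial.X : Polynomial (ZMod p)) ^ k := by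
    intro k
    rw [esymm, map_sum]
    have hterm : ∀ t ∈ Finset.powersetCard k (Finset.univ : Finset (Fin N)),
        aeval v ((∏ i ∈ t, X i : MvPolynomial (Fin N) ℤ)) =
          if t ⊆ Finset.univ.filter (fun j : Fin N => (j : ℕ) < p ^ r)
          then (Polynomial.X : Polynomial (ZMod p)) ^ k else 0 := by
      intro t ht
      rw [map_prod]
      simp only [aeval_X]
      by_cases hsub : t ⊆ Finset.univ.filter (fun j : Fin N => (j : ℕ) < p ^ r)
      · rw [if_pos hsub]
        have hvx : ∀ i ∈ t, v i = Polynomial.X := by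
          intro i hi
          have h2 := (Finset.mem_filter.mp (hsub hi)).2
          simp [hv, h2]
        rw [Finset.prod_congr rfl hvx, Finset.prod_const,
          (Finset.mem_powersetCard.mp ht).2]
      · rw [if_neg hsub]
        obtain ⟨i, hit, hniT⟩ := Finset.not_subset.mp hsub
        refine Finset.prod_eq_zero hit ?_
        have h2 : ¬ (i : ℕ) < p ^ r := fun h =>
          hniT (Finset.mem_filter.mpr ⟨Finset.mem_univ i, h⟩)
        simp [hv, h2]
    rw [Finset.sum_congr rfl hterm, ← Finset.sum_filter, Finset.sum_const]
    have hfilter : (Finset.powersetCard k (Finset.univ : Finset (Fin N))).filter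
        (· ⊆ Finset.univ.filter (fun j : Fin N => (j : ℕ) < p ^ r)) =
        Finset.powersetCard k (Finset.univ.filter (fun j : Fin N => (j : ℕ) < p ^ r)) := by
      apply Finset.ext
      intro t
      simp only [Finset.mem_filter, Finset.mem_powersetCard, Finset.subset_univ, true_and]
      tauto
    rw [hfilter, Finset.card_powersetCard, card_filter_lt_eq hKN]
  have hesymm0 : ∀ k : ℕ, k ≠ 0 → k ≠ p ^ r → aeval v (esymm (Fin N) ℤ k) = 0 := by
    intro k hk0 hkK
    rw [hesymm k]
    have hdvd : p ∣ (p ^ r).choose k := Nat.Prime.dvd_choose_pow hp hk0 hkK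
    rw [← Nat.cast_smul_eq_nsmul (ZMod p),
      (ZMod.natCast_eq_zero_iff _ _).mpr hdvd, zero_smul]
  have hesymmK : aeval v (esymm (Fin N) ℤ (p ^ r)) = Polynomial.X ^ (p ^ r) := by
    rw [hesymm, Nat.choose_self, one_nsmul]
  -- Step 2 : evaluation of esymmPart
  have hpart : ∀ ν : Nat.Partition (m * p ^ r),
      aeval v (esymmPart (Fin N) ℤ ν) =
        if ν.parts = Multiset.replicate m (p ^ r)
        then (Polynomial.X : Polynomial (ZMod p)) ^ (m * p ^ r) else 0 := by
    intro ν
    rw [esymmPart, map_multiset_prod, Multiset.map_map]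
    by_cases hν : ν.parts = Multiset.replicate m (p ^ r)
    · rw [if_pos hν, hν, Multiset.map_replicate, Multiset.prod_replicate,
        Function.comp_apply, hesymmK, ← pow_mul, mul_comm]
    · rw [if_neg hν]
      have hbad : ∃ k ∈ ν.parts, k ≠ p ^ r := by
        by_contra hall
        push_neg at hall
        have hrep : ν.parts = Multiset.replicate (Multiset.card ν.parts) (p ^ r) :=
          Multiset.eq_replicate_card.mpr hall
        have hsum := ν.parts_sum
        rw [hrep, Multiset.sum_replicate, smul_eq_mul] at hsum
        have hcard : Multiset.card ν.parts = m :=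
          Nat.eq_of_mul_eq_mul_right (pow_pos hp.pos r) hsum
        rw [hcard] at hrep
        exact hν hrep
      obtain ⟨k, hk, hkK⟩ := hbad
      apply Multiset.prod_eq_zero
      rw [Multiset.mem_map]
      exact ⟨k, hk, by rw [Function.comp_apply, hesymm0 k (ν.parts_pos hk).ne' hkK]⟩
  -- Step 3 : evaluation of msymm
  have hmsymm : aeval v (msymm (Fin N) ℤ μ) =
      (Nat.card (RotSet (p ^ r) N (m * p ^ r) μ)) •
        (Polynomial.X : Polynomial (ZMod p)) ^ (m * p ^ r) := by
    rw [msymm, map_sum]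
    have hterm : ∀ s : {a : Sym (Fin N) (m * p ^ r) // Nat.Partition.ofSym a = μ},
        aeval v (((s.1.1.map X).prod : MvPolynomial (Fin N) ℤ)) =
          if (∀ i ∈ s.1, (i : ℕ) < p ^ r)
          then (Polynomial.X : Polynomial (ZMod p)) ^ (m * p ^ r) else 0 := by
      intro s
      rw [map_multiset_prod, Multiset.map_map]
      by_cases hsin : ∀ i ∈ s.1, (i : ℕ) < p ^ r
      · rw [if_pos hsin]
        have hmapc : s.1.1.map (⇑(aeval v) ∘ (X : Fin N → MvPolynomial (Fin N) ℤ)) =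
            Multiset.replicate (m * p ^ r) Polynomial.X := by
          rw [Multiset.eq_replicate]
          constructor
          · rw [Multiset.card_map]; exact s.1.2
          · intro b hb
            rw [Multiset.mem_map] at hb
            obtain ⟨i, hi, rfl⟩ := hb
            rw [Function.comp_apply, aeval_X]
            simp [hv, hsin i hi]
        rw [hmapc, Multiset.prod_replicate]
      · rw [if_neg hsin]
        push_neg at hsin
        obtain ⟨i, hi, hniK⟩ := hsin
        apply Multiset.prod_eq_zero
        rw [Multiset.mem_map]
        refine ⟨i, hi, ?_⟩
        rw [Function.comp_apply, aeval_X]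
        simp [hv, hniK]
    rw [Finset.sum_congr rfl (fun s _ => hterm s), ← Finset.sum_filter, Finset.sum_const]
    congr 1
    rw [← Fintype.card_subtype, ← Nat.card_eq_fintype_card]
    exact Nat.card_congr (Equiv.subtypeSubtypeEquivSubtypeInter
      (fun s : Sym (Fin N) (m * p ^ r) => Nat.Partition.ofSym s = μ)
      (fun s : Sym (Fin N) (m * p ^ r) => ∀ i ∈ s, (i : ℕ) < p ^ r))
  -- Step 4 : glue
  set ξ : Nat.Partition (m * p ^ r) := ⟨Multiset.replicate m (p ^ r),
      fun hi => by rw [Multiset.eq_of_mem_replicate hi]; exact pow_pos hp.pos r,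
      by rw [Multiset.sum_replicate, smul_eq_mul]⟩ with hξ
  show (p : ℤ) ∣ a ξ
  have hmain := congrArg (aeval v) ha
  rw [map_sum, hmsymm] at hmain
  have hRHS : ∑ ν : Nat.Partition (m * p ^ r), aeval v (a ν • esymmPart (Fin N) ℤ ν) =
      a ξ • (Polynomial.X : Polynomial (ZMod p)) ^ (m * p ^ r) := by
    rw [Finset.sum_congr rfl (fun ν _ => by rw [map_zsmul, hpart ν])]
    rw [Finset.sum_eq_single ξ]
    · rw [if_pos rfl]
    · intro ν _ hνξ
      rw [if_neg, smul_zero]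
      intro h
      exact hνξ (Nat.Partition.ext h)
    · intro h
      exact absurd (Finset.mem_univ ξ) h
  rw [hRHS] at hmain
  have hdvd := key_card_dvd p m r N hp hm hN μ hμ
  have hzero : (Nat.card (RotSet (p ^ r) N (m * p ^ r) μ)) •
      (Polynomial.X : Polynomial (ZMod p)) ^ (m * p ^ r) = 0 := by
    rw [← Nat.cast_smul_eq_nsmul (ZMod p),
      (ZMod.natCast_eq_zero_iff _ _).mpr hdvd, zero_smul]
  rw [hzero] at hmain
  have hcoeff := congrArg (fun q : Polynomial (ZMod p) => q.coeff (m * p ^ r)) hmain.symm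
  simp only [Polynomial.coeff_smul, Polynomial.coeff_X_pow, if_pos rfl,
    Polynomial.coeff_zero, smul_eq_mul, mul_one] at hcoeff
  rw [← ZMod.intCast_zmod_eq_zero_iff_dvd]
  simpa using hcoeff
end

section
/- Let $p$ be a prime, let $N = p^s$ be a positive power of $p$, and let $R$ be a commutative ring in which $p \cdot 1 = 0$. Suppose $\gamma_1, \dots, \gamma_N \in R$ satisfy $e_r(\gamma_1, \dots, \gamma_N) = 0$ for all $1 \leq r \leq N - 1$. Then for every nonempty partition $\mu$ of a positive integer having strictly fewer than $N$ parts, one has $m_{\mu}(\gamma_1, \dots, \gamma_N) = 0$ in $R$. -/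
/-!
Over `ZMod p`, write `m_μ = φ(e₁, …, e_N)` by the fundamental theorem of symmetric polynomials.
Once `e₁, …, e_{N-1}` vanish this becomes `q(e_N)` with `q = φ(0, …, 0, X)`, so it suffices to show
`q = 0`. Setting every variable to `X` sends `e_r` to `(N choose r) X^r`, which vanishes mod `p`
for `0 < r < N` because `N = p^s`; hence `q(X^N) = m_μ(X, …, X) = c X^k`, where `c` is the number
of monomials of `m_μ`. The cyclic group of order `N` permutes these monomials without fixed
points (a fixed monomial involves every variable, so `μ` would have `N` parts), so `p ∣ c`.
-/

open MulAction MvPolynomial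
open scoped Polynomial

namespace Sym

variable {G σ : Type*} [Group G] [MulAction G σ] {k : ℕ}

instance : MulAction G (Sym σ k) where
  smul g x := x.map (g • ·)
  one_smul x := by
    change x.map _ = x
    simp
  mul_smul g h x := by
    change x.map _ = (x.map _).map _
    rw [map_map]
    congr 1
    funext a
    exact mul_smul g h a

lemma smul_mem_smul {g : G} {a : σ} {x : Sym σ k} (ha : a ∈ x) : g • a ∈ g • x :=
  Multiset.mem_map_of_mem _ ha

lemma mem_of_mem_fixedPoints [IsPretransitive G σ] (hk : 0 < k) {x : Sym σ k}
    (hx : x ∈ fixedPoints G (Sym σ k)) (a : σ) : a ∈ x := by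
  obtain ⟨b, hb⟩ := Multiset.card_pos_iff_exists_mem.mp (x.2 ▸ hk)
  obtain ⟨g, rfl⟩ := exists_smul_eq G b a
  simpa only [hx g] using smul_mem_smul (g := g) hb

end Sym

namespace Nat.Partition

variable {G σ : Type*} [Group G] [MulAction G σ] [DecidableEq σ] {k : ℕ}

lemma ofSym_smul (g : G) (x : Sym σ k) : ofSym (g • x) = ofSym x :=
  ofSym_map (MulAction.toPerm g) x

variable (G σ) in
def ofSymShape (μ : k.Partition) : SubMulAction G (Sym σ k) where
  carrier := {x | ofSym x = μ}
  smul_mem' g x hx := (ofSym_smul g x).trans hx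

lemma card_parts_ofSym_of_forall_mem [Fintype σ] {x : Sym σ k} (hx : ∀ a, a ∈ x) :
    Multiset.card (ofSym x).parts = Fintype.card σ := by
  have : x.1.toFinset = Finset.univ :=
    Finset.eq_univ_of_forall fun a => Multiset.mem_toFinset.mpr (hx a)
  rw [ofSym, Multiset.card_map, ← Multiset.card_toFinset, this, Finset.card_univ]

theorem prime_dvd_card_ofSym_eq {p : ℕ} [Fact p.Prime] (hG : IsPGroup p G)
    [IsPretransitive G σ] [Fintype σ] (hk : 0 < k) (μ : k.Partition)
    (hμ : Multiset.card μ.parts < Fintype.card σ) :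
    p ∣ Fintype.card {x : Sym σ k // ofSym x = μ} := by
  have : IsEmpty (fixedPoints G (ofSymShape G σ μ)) := by
    refine ⟨fun ⟨x, hx⟩ => hμ.ne ?_⟩
    rw [← x.2]
    exact card_parts_ofSym_of_forall_mem <|
      Sym.mem_of_mem_fixedPoints hk fun g => congrArg Subtype.val (hx g)
  have hmod := hG.card_modEq_card_fixedPoints (ofSymShape G σ μ)
  rw [Nat.card_of_isEmpty (α := fixedPoints G (ofSymShape G σ μ))] at hmod
  rw [← Nat.card_eq_fintype_card]
  exact Nat.modEq_zero_iff_dvd.mp hmod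

end Nat.Partition

namespace MvPolynomial

section Specialization

variable {σ R A : Type*} [Fintype σ] [CommSemiring R] [CommSemiring A] [Algebra R A]

theorem aeval_const_esymm (x : A) (r : ℕ) :
    aeval (fun _ : σ => x) (esymm σ R r) = (Fintype.card σ).choose r * x ^ r := by
  simp_rw [esymm, map_sum, map_prod, aeval_X, Finset.prod_const]
  rw [Finset.sum_congr rfl fun t ht => by rw [(Finset.mem_powersetCard.mp ht).2],
    Finset.sum_const, Finset.card_powersetCard, Finset.card_univ, nsmul_eq_mul]

variable [DecidableEq σ] {k : ℕ}

theorem map_msymm {S : Type*} [CommSemiring S] (f : R →+* S) (μ : k.Partition) :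
    map f (msymm σ R μ) = msymm σ S μ := by
  simp_rw [msymm, map_sum, map_multiset_prod, Multiset.map_map, Function.comp_def, map_X]

theorem aeval_const_msymm (x : A) (μ : k.Partition) :
    aeval (fun _ : σ => x) (msymm σ R μ) =
      Fintype.card {a : Sym σ k // Nat.Partition.ofSym a = μ} * x ^ k := by
  simp_rw [msymm, map_sum, map_multiset_prod, Multiset.map_map, Function.comp_def, aeval_X,
    Multiset.map_const', Multiset.prod_replicate]
  rw [Finset.sum_congr rfl fun a _ => by rw [a.1.2], Finset.sum_const, Finset.card_univ,
    nsmul_eq_mul]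

end Specialization

section Fundamental

variable {K : Type*} [CommRing K] {N : ℕ}

theorem IsSymmetric.exists_eq_aeval_esymm {P : MvPolynomial (Fin N) K} (hP : P.IsSymmetric) :
    ∃ φ : MvPolynomial (Fin N) K, aeval (fun i : Fin N => esymm (Fin N) K (i + 1)) φ = P := by
  obtain ⟨φ, hφ⟩ := (esymmAlgHom_fin_bijective K N).2 ⟨P, hP⟩
  exact ⟨φ, by simpa [esymmAlgHom_apply] using congrArg Subtype.val hφ⟩

theorem aeval_aeval_esymm_of_esymm_eq_zero (φ : MvPolynomial (Fin N) K) {A : Type*}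
    [CommRing A] [Algebra K A] (f : Fin N → A)
    (hf : ∀ r, 0 < r → r < N → aeval f (esymm (Fin N) K r) = 0) :
    aeval (fun i : Fin N => aeval f (esymm (Fin N) K (i + 1))) φ =
      Polynomial.aeval (aeval f (esymm (Fin N) K N))
        (aeval (fun i : Fin N => if (i : ℕ) + 1 = N then (Polynomial.X : K[X]) else 0) φ) := by
  rw [comp_aeval_apply]
  refine congrArg (aeval · φ) ?_
  funext i
  split_ifs with hi
  · rw [Polynomial.aeval_X, hi]
  · rw [map_zero]
    exact hf _ i.val.succ_pos (by omega)

theorem IsSymmetric.aeval_eq_zero_of_esymm_eq_zero {P : MvPolynomial (Fin N) K}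
    (hP : P.IsSymmetric) (hN : 0 < N) (hchoose : ∀ r, 0 < r → r < N → (N.choose r : K) = 0)
    (hdiag : aeval (fun _ => (Polynomial.X : K[X])) P = 0) {R : Type*} [CommRing R]
    [Algebra K R] (γ : Fin N → R) (he : ∀ r, 0 < r → r < N → aeval γ (esymm (Fin N) K r) = 0) :
    aeval γ P = 0 := by
  obtain ⟨φ, rfl⟩ := hP.exists_eq_aeval_esymm
  have hdiag_esymm : ∀ r, 0 < r → r < N →
      aeval (fun _ => (Polynomial.X : K[X])) (esymm (Fin N) K r) = 0 := fun r hr hrN => by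
    rw [aeval_const_esymm, Fintype.card_fin, ← map_natCast Polynomial.C, hchoose r hr hrN,
      map_zero, zero_mul]
  have hX_pow : (Polynomial.X : K[X]) ^ N = aeval (fun _ => Polynomial.X) (esymm (Fin N) K N) := by
    rw [aeval_const_esymm, Fintype.card_fin, Nat.choose_self, Nat.cast_one, one_mul]
  -- `q(X^N) = P(X, …, X) = 0`, and substituting `X^N` for `X` is injective.
  have hq :
      aeval (fun i : Fin N => if (i : ℕ) + 1 = N then (Polynomial.X : K[X]) else 0) φ = 0 := by
    rw [← Polynomial.expand_eq_zero hN, ← Polynomial.aeval_X_left_apply (Polynomial.expand K N _),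
      Polynomial.expand_aeval, hX_pow, ← aeval_aeval_esymm_of_esymm_eq_zero φ _ hdiag_esymm,
      ← comp_aeval_apply, hdiag]
  rw [comp_aeval_apply, aeval_aeval_esymm_of_esymm_eq_zero φ γ he, hq, map_zero]

end Fundamental

end MvPolynomial

theorem msymm_eval_eq_zero_of_esymm_eval_eq_zero_general
    (p s : ℕ) (hp : p.Prime)
    (R : Type) [CommRing R] (hpR : (p : R) = 0)
    (γ : Fin (p ^ s) → R)
    (he : ∀ r : ℕ, 1 ≤ r → r ≤ p ^ s - 1 →
      MvPolynomial.eval γ (MvPolynomial.esymm (Fin (p ^ s)) R r) = 0)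
    (k : ℕ) (hk : 0 < k) (μ : Nat.Partition k)
    (hcard : Multiset.card μ.parts < p ^ s) :
    MvPolynomial.eval γ (MvPolynomial.msymm (Fin (p ^ s)) R μ) = 0 := by
  have : Fact p.Prime := ⟨hp⟩
  have : NeZero (p ^ s) := ⟨(pow_pos hp.pos s).ne'⟩
  let _ : Algebra (ZMod p) R := ZMod.algebra' R (ringChar R) (ringChar.dvd hpR)
  have hcyclic : IsPGroup p (Multiplicative (Fin (p ^ s))) := IsPGroup.of_card (n := s) (by simp)
  rw [← map_msymm (algebraMap (ZMod p) R), eval_map, ← aeval_def]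
  refine (msymm_isSymmetric _ _ μ).aeval_eq_zero_of_esymm_eq_zero (pow_pos hp.pos s)
    (fun r hr hrN => ?_) ?_ γ (fun r hr hrN => ?_)
  · exact (ZMod.natCast_eq_zero_iff _ _).mpr (hp.dvd_choose_pow hr.ne' hrN.ne)
  · rw [aeval_const_msymm, (CharP.cast_eq_zero_iff (ZMod p)[X] p _).mpr
      (Nat.Partition.prime_dvd_card_ofSym_eq hcyclic hk μ (by simpa using hcard)), zero_mul]
  · rw [aeval_def, ← eval_map, map_esymm]
    exact he r hr (by omega)

/-- Let `p` be a prime, `N = p^s` a positive power of `p`, and `R` a commutative ring in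
which `p·1 = 0`.  Suppose `γ₁, …, γ_N ∈ R` satisfy `e_r(γ₁,…,γ_N) = 0` for all
`1 ≤ r ≤ N - 1`.  Then for every nonempty partition `μ` of a positive integer having
strictly fewer than `N` parts, `m_μ(γ₁,…,γ_N) = 0` in `R`. -/
theorem msymm_eval_eq_zero_of_esymm_eval_eq_zero
    (p s : ℕ) (hp : p.Prime) (hs : 0 < s)
    (R : Type) [CommRing R] (hpR : (p : R) = 0)
    (γ : Fin (p ^ s) → R)
    (he : ∀ r : ℕ, 1 ≤ r → r ≤ p ^ s - 1 →
      MvPolynomial.eval γ (MvPolynomial.esymm (Fin (p ^ s)) R r) = 0)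
    (k : ℕ) (hk : 0 < k) (μ : Nat.Partition k)
    (hcard : Multiset.card μ.parts < p ^ s) :
    MvPolynomial.eval γ (MvPolynomial.msymm (Fin (p ^ s)) R μ) = 0 :=
  msymm_eval_eq_zero_of_esymm_eval_eq_zero_general p s hp R hpR γ he k hk μ hcard
end

section
/- Let $f \in A[X]$ be a nonzero polynomial whose lowest-degree term is $a_{n_0} X^{n_0}$ with $a_{n_0} \neq 0$. Then the element $\prod_{j=1}^{q^d} f(\beta_j)$ of $A[[u]]$ has coefficient of $u^n$ equal to $0$ for all $n < n_0$, and its coefficient of $u^{n_0}$ equals $a_{n_0}^{q^d}$. -/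
/-!
For any `g ∈ A[X]`, `∏ⱼ g(βⱼ)` is the image of the resultant `Res(P, g)`, a determinant in the
coefficients of `P` and `g`, hence an element of `A[[u]]`. Write `f = X^{n₀} h`. Since `ρ_π` is
monic, `P(0) = -u`, and `(-1)^{q^d} = -1` in characteristic `p`, so `Res(P, X^{n₀}) = u^{n₀}` and
`∏ⱼ f(βⱼ)` is the image of `u^{n₀} Res(P, h)`. Reducing modulo `u` turns `P` into `X^{q^d}`, so the
constant term of `Res(P, h)` is `Res(X^{q^d}, h) = h(0)^{q^d} = a_{n₀}^{q^d}`.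
-/

open Polynomial

namespace Polynomial

variable {R : Type*} [CommRing R]

lemma resultant_prod_X_sub_C_left [Nontrivial R] {ι : Type*} (s : Finset ι) (β : ι → R)
    {g : R[X]} {n : ℕ} (hg : g.natDegree ≤ n) :
    (∏ i ∈ s, (X - C (β i))).resultant g s.card n = ∏ i ∈ s, g.eval (β i) := by
  rw [← natDegree_finsetProd_X_sub_C_eq_card s β, resultant_prod_left _ _ _ _ (by simp) hg]
  exact Finset.prod_congr rfl fun i _ => by rw [natDegree_X_sub_C, resultant_X_sub_C_left _ _ _ hg]

lemma map_resultant_eq_prod_eval {S : Type*} [CommRing S] [Nontrivial S] (φ : R →+* S)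
    {P : R[X]} {N : ℕ} {β : Fin N → S} (hP : P.map φ = ∏ j, (X - C (β j)))
    {g : R[X]} {n : ℕ} (hg : g.natDegree ≤ n) :
    φ (P.resultant g N n) = ∏ j, (g.map φ).eval (β j) := by
  rw [← resultant_map_map, hP]
  simpa using resultant_prod_X_sub_C_left Finset.univ β (natDegree_map_le.trans hg)

lemma resultant_X_pow_right_eq_neg_coeff_zero_pow {P : R[X]} {N : ℕ} (hP : P.natDegree ≤ N)
    (hneg : (-1 : R) ^ N = -1) (k : ℕ) :
    P.resultant (X ^ k) N k = (-P.coeff 0) ^ k := by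
  rw [resultant_X_pow_right _ _ _ hP, pow_mul, hneg, ← neg_pow]

end Polynomial

namespace PowerSeries

lemma constantCoeff_resultant_map_C {A : Type*} [CommRing A] {P : (PowerSeries A)[X]} {N : ℕ}
    (hP : P.map constantCoeff = Polynomial.X ^ N) {h : A[X]} {n : ℕ} (hh : h.natDegree ≤ n) :
    constantCoeff (P.resultant (h.map C) N n) = h.coeff 0 ^ N := by
  rw [← resultant_map_map, hP, Polynomial.map_map, constantCoeff_comp_C, Polynomial.map_id,
    resultant_X_pow_left _ _ _ hh]

theorem exists_map_eq_prod_eval_roots {A L : Type*} [CommRing A] [CommRing L] [Nontrivial L]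
    {N : ℕ} (hN : 0 < N) (hneg : (-1 : A) ^ N = -1) {Q : A[X]} (hQ0 : Q.coeff 0 = 1)
    (hQN : Q.natDegree ≤ N) (toL : PowerSeries A →+* L) {β : Fin N → L}
    (hsplit : (Polynomial.X ^ N - Polynomial.C X * Q.map C).map toL =
      ∏ j, (Polynomial.X - Polynomial.C (β j)))
    {f : A[X]} {n₀ : ℕ} (hlow : ∀ i < n₀, f.coeff i = 0) :
    ∃ g : PowerSeries A, toL g = ∏ j, (f.map (toL.comp C)).eval (β j) ∧
      (∀ n < n₀, coeff n g = 0) ∧ coeff n₀ g = f.coeff n₀ ^ N := by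
  set P : (PowerSeries A)[X] := Polynomial.X ^ N - Polynomial.C X * Q.map C with hP
  have hPdeg : P.natDegree ≤ N := by
    simpa using natDegree_sub_le_of_le (natDegree_X_pow_le N)
      ((natDegree_C_mul_le X (Q.map C)).trans (natDegree_map_le.trans hQN))
  have hP0 : P.coeff 0 = -X := by simp [hP, hN.ne, hQ0]
  have hPconst : P.map constantCoeff = Polynomial.X ^ N := by simp [hP]
  have hneg' : (-1 : PowerSeries A) ^ N = -1 := by simpa using congrArg C hneg
  obtain ⟨h, rfl⟩ := Polynomial.X_pow_dvd_iff.mpr hlow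
  refine ⟨X ^ n₀ * P.resultant (h.map C) N h.natDegree, ?_, fun n hn => ?_, ?_⟩
  · have hXpow : X ^ n₀ = P.resultant (Polynomial.X ^ n₀) N n₀ := by
      rw [resultant_X_pow_right_eq_neg_coeff_zero_pow hPdeg hneg', hP0, neg_neg]
    rw [map_mul, hXpow, map_resultant_eq_prod_eval toL hsplit (natDegree_X_pow_le _),
      map_resultant_eq_prod_eval toL hsplit natDegree_map_le, ← Finset.prod_mul_distrib]
    simp [Polynomial.map_map]
  · rw [coeff_X_pow_mul', if_neg (by omega)]
  · rw [coeff_X_pow_mul', if_pos le_rfl, Nat.sub_self, coeff_zero_eq_constantCoeff_apply,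
      constantCoeff_resultant_map_C hPconst le_rfl, Polynomial.coeff_X_pow_mul', if_pos le_rfl,
      Nat.sub_self]

end PowerSeries

section Carlitz

variable {F : Type*} [CommRing F] {ρ : F[X] → F[X][X]}

lemma carlitz_one (hρC : ∀ c : F, ρ (C c) = C (C c) * X) : ρ 1 = X := by
  simpa using hρC 1

lemma carlitz_X_pow_succ (hρmul : ∀ a b, ρ (a * b) = (ρ a).comp (ρ b)) (i : ℕ) :
    ρ (X ^ (i + 1)) = (ρ (X ^ i)).comp (ρ X) := by
  rw [pow_succ, hρmul]

lemma carlitz_C_mul (hρC : ∀ c : F, ρ (C c) = C (C c) * X)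
    (hρmul : ∀ a b, ρ (a * b) = (ρ a).comp (ρ b)) (c : F) (a : F[X]) :
    ρ (C c * a) = C (C c) * ρ a := by
  rw [hρmul, hρC, mul_comp, C_comp, X_comp]

lemma carlitz_eq_sum (hρC : ∀ c : F, ρ (C c) = C (C c) * X) (hρadd : ∀ a b, ρ (a + b) = ρ a + ρ b)
    (hρmul : ∀ a b, ρ (a * b) = (ρ a).comp (ρ b)) (a : F[X]) :
    ρ a = ∑ i ∈ Finset.range (a.natDegree + 1), C (C (a.coeff i)) * ρ (X ^ i) := by
  let ρ' : F[X] →+ F[X][X] := AddMonoidHom.mk' ρ hρadd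
  conv_lhs => rw [a.as_sum_range_C_mul_X_pow]
  change ρ' _ = _
  simp [ρ', map_sum, carlitz_C_mul hρC hρmul]

variable [IsDomain F] {q : ℕ}

lemma natDegree_carlitz_X (hρT : ρ X = C X * X + X ^ q) (hq : 1 < q) : (ρ X).natDegree = q := by
  rw [hρT, natDegree_add_eq_right_of_natDegree_lt] <;> simp [hq]

lemma monic_carlitz_X (hρT : ρ X = C X * X + X ^ q) (hq : 1 < q) : (ρ X).Monic := by
  rw [hρT]
  exact (monic_X_pow q).add_of_right (by simp [hq])

lemma natDegree_carlitz_X_pow (hρC : ∀ c : F, ρ (C c) = C (C c) * X)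
    (hρT : ρ X = C X * X + X ^ q) (hq : 1 < q) (hρmul : ∀ a b, ρ (a * b) = (ρ a).comp (ρ b))
    (i : ℕ) : (ρ (X ^ i)).natDegree = q ^ i := by
  induction i with
  | zero => simp [carlitz_one hρC]
  | succ i ih =>
    rw [carlitz_X_pow_succ hρmul, natDegree_comp, ih, natDegree_carlitz_X hρT hq, pow_succ]

lemma monic_carlitz_X_pow (hρC : ∀ c : F, ρ (C c) = C (C c) * X)
    (hρT : ρ X = C X * X + X ^ q) (hq : 1 < q) (hρmul : ∀ a b, ρ (a * b) = (ρ a).comp (ρ b))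
    (i : ℕ) : (ρ (X ^ i)).Monic := by
  induction i with
  | zero => simp [carlitz_one hρC]
  | succ i ih =>
    rw [carlitz_X_pow_succ hρmul]
    exact ih.comp (monic_carlitz_X hρT hq) (by rw [natDegree_carlitz_X hρT hq]; omega)

lemma monic_carlitz (hρC : ∀ c : F, ρ (C c) = C (C c) * X)
    (hρT : ρ X = C X * X + X ^ q) (hq : 1 < q) (hρadd : ∀ a b, ρ (a + b) = ρ a + ρ b)
    (hρmul : ∀ a b, ρ (a * b) = (ρ a).comp (ρ b)) {a : F[X]} (ha : a.Monic) : (ρ a).Monic := by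
  rw [carlitz_eq_sum hρC hρadd hρmul, Finset.sum_range_succ, ha.coeff_natDegree, map_one, map_one,
    one_mul]
  refine (monic_carlitz_X_pow hρC hρT hq hρmul _).add_of_right ?_
  rw [degree_eq_natDegree (monic_carlitz_X_pow hρC hρT hq hρmul _).ne_zero,
    natDegree_carlitz_X_pow hρC hρT hq hρmul]
  refine (degree_sum_le _ _).trans_lt
    ((Finset.sup_lt_iff (WithBot.bot_lt_coe _)).mpr fun i hi => ?_)
  refine (degree_le_natDegree.trans (Nat.cast_le.mpr (natDegree_C_mul_le _ _))).trans_lt ?_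
  rw [natDegree_carlitz_X_pow hρC hρT hq hρmul, Nat.cast_lt]
  exact Nat.pow_lt_pow_right hq (Finset.mem_range.mp hi)

end Carlitz

theorem prod_roots_leading_coeff_general
    (Fq : Type) [Field Fq] [Fintype Fq]
    (ρ : Polynomial Fq → Polynomial (Polynomial Fq))
    (hρC : ∀ c : Fq, ρ (Polynomial.C c) = Polynomial.C (Polynomial.C c) * Polynomial.X)
    (hρT : ρ Polynomial.X =
      Polynomial.C Polynomial.X * Polynomial.X + Polynomial.X ^ Fintype.card Fq)
    (hρadd : ∀ a b : Polynomial Fq, ρ (a + b) = ρ a + ρ b)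
    (hρmul : ∀ a b : Polynomial Fq, ρ (a * b) = (ρ a).comp (ρ b))
    (π : Polynomial Fq) (hπmonic : π.Monic)
    (hπdeg : (ρ π).natDegree = Fintype.card Fq ^ π.natDegree)
    (L : Type) [Field L]
    (toL : PowerSeries (Polynomial Fq) →+* L)
    (β : Fin (Fintype.card Fq ^ π.natDegree) → L)
    (hsplit :
      Polynomial.map toL
        (Polynomial.X ^ (Fintype.card Fq ^ π.natDegree) -
          Polynomial.C PowerSeries.X *
            ((ρ π).reverse.map (PowerSeries.C (R := Polynomial Fq)))) =
      ∏ j : Fin (Fintype.card Fq ^ π.natDegree),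
        (Polynomial.X - Polynomial.C (β j)))
    (f : Polynomial (Polynomial Fq)) (n₀ : ℕ)
    (hlow : ∀ i < n₀, f.coeff i = 0) :
    ∃ g : PowerSeries (Polynomial Fq),
      toL g = ∏ j : Fin (Fintype.card Fq ^ π.natDegree),
        Polynomial.eval (β j) (f.map (toL.comp (PowerSeries.C (R := Polynomial Fq)))) ∧
      (∀ n < n₀, PowerSeries.coeff (R := Polynomial Fq) n g = 0) ∧
      PowerSeries.coeff (R := Polynomial Fq) n₀ g =
        (f.coeff n₀) ^ (Fintype.card Fq ^ π.natDegree) := by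
  have hneg : (-1 : Polynomial Fq) ^ (Fintype.card Fq ^ π.natDegree) = -1 := by
    simpa using congrArg C (FiniteField.pow_card_pow π.natDegree (-1 : Fq))
  have hρπ : (ρ π).Monic := monic_carlitz hρC hρT Fintype.one_lt_card hρadd hρmul hπmonic
  exact PowerSeries.exists_map_eq_prod_eval_roots (pow_pos Fintype.card_pos _) hneg
    (by rw [coeff_zero_reverse, hρπ.leadingCoeff]) ((reverse_natDegree_le _).trans hπdeg.le)
    toL hsplit hlow

/-- Same setup as the previous statement: `A = 𝔽_q[T]`, `ρ` the Carlitz module, `π` monic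
irreducible of degree `d`, `f_π` the reverse of `ρ_π`, `P(X) = X^(q^d) - u·f_π(X)` over
`A[[u]]`, and `L ⊇ Frac(A[[u]])` a field over which `P` splits with roots `β₁, …, β_{q^d}`.
Let `f ∈ A[X]` be nonzero with lowest-degree term `a_{n₀} X^{n₀}` (`a_{n₀} ≠ 0`).  Then
the element `∏ⱼ f(βⱼ)` of `A[[u]]` has coefficient of `uⁿ` equal to `0` for all `n < n₀`,
and its coefficient of `u^{n₀}` equals `a_{n₀}^(q^d)`. -/
theorem prod_roots_leading_coeff
    (Fq : Type) [Field Fq] [Fintype Fq]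
    (ρ : Polynomial Fq → Polynomial (Polynomial Fq))
    (hρC : ∀ c : Fq, ρ (Polynomial.C c) = Polynomial.C (Polynomial.C c) * Polynomial.X)
    (hρT : ρ Polynomial.X =
      Polynomial.C Polynomial.X * Polynomial.X + Polynomial.X ^ Fintype.card Fq)
    (hρadd : ∀ a b : Polynomial Fq, ρ (a + b) = ρ a + ρ b)
    (hρmul : ∀ a b : Polynomial Fq, ρ (a * b) = (ρ a).comp (ρ b))
    (π : Polynomial Fq) (hπmonic : π.Monic) (hπirr : Irreducible π)
    (hπdeg : (ρ π).natDegree = Fintype.card Fq ^ π.natDegree)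
    (L : Type) [Field L]
    [Algebra (FractionRing (PowerSeries (Polynomial Fq))) L]
    (toL : PowerSeries (Polynomial Fq) →+* L)
    (htoL : toL = (algebraMap (FractionRing (PowerSeries (Polynomial Fq))) L).comp
      (algebraMap (PowerSeries (Polynomial Fq))
        (FractionRing (PowerSeries (Polynomial Fq)))))
    (β : Fin (Fintype.card Fq ^ π.natDegree) → L)
    (hsplit :
      Polynomial.map toL
        (Polynomial.X ^ (Fintype.card Fq ^ π.natDegree) -
          Polynomial.C PowerSeries.X *
            ((ρ π).reverse.map (PowerSeries.C (R := Polynomial Fq)))) =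
      ∏ j : Fin (Fintype.card Fq ^ π.natDegree),
        (Polynomial.X - Polynomial.C (β j)))
    (f : Polynomial (Polynomial Fq)) (n₀ : ℕ)
    (hlow : ∀ i < n₀, f.coeff i = 0) (hn₀ : f.coeff n₀ ≠ 0) :
    ∃ g : PowerSeries (Polynomial Fq),
      toL g = ∏ j : Fin (Fintype.card Fq ^ π.natDegree),
        Polynomial.eval (β j) (f.map (toL.comp (PowerSeries.C (R := Polynomial Fq)))) ∧
      (∀ n < n₀, PowerSeries.coeff (R := Polynomial Fq) n g = 0) ∧
      PowerSeries.coeff (R := Polynomial Fq) n₀ g =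
        (f.coeff n₀) ^ (Fintype.card Fq ^ π.natDegree) :=
  prod_roots_leading_coeff_general Fq ρ hρC hρT hρadd hρmul π hπmonic hπdeg L toL β hsplit f n₀ hlow
end
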